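/- Fix b ≤ −3/16, set γ = 1 + (16/3)b (so γ ≤ 0) and s_* = √(−γ/(1−γ)). Then the function s ↦ M(φ_{1,2s}) := ∫_ℝ Φ_{1,2s}(x)² dx, defined for s ∈ (−1, −s_*), is continuous, strictly increasing, and maps (−1, −s_*) bijectively onto (0, ∞). -/

import Mathlib

open MeasureTheory Real Set

/-- The (bright) soliton profile of the derivative NLS after gauge transformation. -/
noncomputable def PhiB (γ ω c x : ℝ) : ℝ :=
  Real.sqrt (2 * (4 * ω - c ^ 2) /
    (Real.sqrt (c ^ 2 + γ * (4 * ω - c ^ 2)) * Real.cosh (Real.sqrt (4 * ω - c ^ 2) * x) - c))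

/-- Mass of the soliton with parameters `(ω, c) = (1, 2s)`. -/
noncomputable def massCurve (γ s : ℝ) : ℝ := ∫ x : ℝ, (PhiB γ 1 (2 * s) x) ^ 2

/-!
Substituting `y = 2√(1 - s²) x` turns the mass into `2√(1 - s²) ∫ dy / (w cosh y - s)` with
`w = √(s² + γ (1 - s²))`, and `∫ dy / (a cosh y + b) = (2 / d) artanh (d / b)` with `d = √(b² - a²)`
for `0 < a < b` (and `2 / a` for `a = b`). Writing `s = -cos θ`, `w < -s` iff `γ < 0`, and then
`M = (4 / β) artanh (β tan θ)` with `β = √(-γ)`, while `M = 4 tan θ` for `γ = 0`. So `M` is a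
composition of continuous increasing bijections: `s ↦ tan θ` from `(-1, -s_*)` onto
`{z | 0 < z, β z < 1}` (the endpoint `-s_*` is where `β tan θ = 1`), then `z ↦ (4 / β) artanh (β z)`
onto `(0, ∞)`.
-/

open Filter Topology

lemma integral_eq_two_mul_sub_of_even {f F : ℝ → ℝ} {l : ℝ} (heven : ∀ x, f (-x) = f x)
    (hf : ∀ x, 0 ≤ f x) (hF : ∀ x, HasDerivAt F (f x) x) (hl : Tendsto F atTop (𝓝 l)) :
    ∫ x, f x = 2 * (l - F 0) := by
  have habs : ∀ x, f |x| = f x := fun x => by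
    rcases abs_choice x with h | h <;> rw [h]
    exact heven x
  calc ∫ x, f x = ∫ x, f |x| := by simp_rw [habs]
    _ = 2 * ∫ x in Ioi 0, f x := integral_comp_abs
    _ = 2 * (l - F 0) := by
      rw [integral_Ioi_of_hasDerivAt_of_nonneg' (fun x _ => hF x) (fun x _ => hf x) hl]

lemma integral_inv_mul_cosh_add_self {a : ℝ} (ha : 0 < a) :
    ∫ x, (a * cosh x + a)⁻¹ = 2 / a := by
  have hderiv : ∀ x, HasDerivAt (fun x => -2 / (a * (exp x + 1))) (a * cosh x + a)⁻¹ x := by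
    intro x
    refine ((hasDerivAt_const x (-2)).div
      (((hasDerivAt_exp x).add_const 1).const_mul a) (by positivity)).congr_deriv ?_
    rw [cosh_eq, exp_neg]
    field_simp
    ring
  have hlim : Tendsto (fun x => -2 / (a * (exp x + 1))) atTop (𝓝 0) :=
    tendsto_const_nhds.div_atTop
      ((tendsto_atTop_add_const_right _ 1 tendsto_exp_atTop).const_mul_atTop ha)
  rw [integral_eq_two_mul_sub_of_even (fun x => by rw [cosh_neg])
    (fun x => by positivity) hderiv hlim]
  field_simp
  norm_num

lemma integral_inv_mul_cosh_add {a b : ℝ} (ha : 0 < a) (hab : a < b) :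
    ∫ x, (a * cosh x + b)⁻¹ = 2 / √(b ^ 2 - a ^ 2) * artanh (√(b ^ 2 - a ^ 2) / b) := by
  set d := √(b ^ 2 - a ^ 2)
  have hd : 0 < d := sqrt_pos.mpr (by nlinarith)
  have hd2 : d ^ 2 = b ^ 2 - a ^ 2 := sq_sqrt (by nlinarith)
  have hb : 0 < b := ha.trans hab
  have hdb : d < b := by nlinarith
  set F : ℝ → ℝ := fun x => log (1 - 2 * d / (a * exp x + b + d)) / d
  have hderiv : ∀ x, HasDerivAt F (a * cosh x + b)⁻¹ x := by
    intro x
    have hE : 0 < a * exp x + b - d := by have := exp_pos x; nlinarith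
    have hE' : 0 < a * exp x + b + d := by positivity
    have hq : 0 < 1 - 2 * d / (a * exp x + b + d) := by
      rw [sub_pos, div_lt_one hE']; linarith
    refine ((((hasDerivAt_const x (2 * d)).div (((hasDerivAt_exp x).const_mul a).add_const _
      |>.add_const _) hE'.ne').const_sub 1).log hq.ne').div_const d |>.congr_deriv ?_
    simp only [Pi.div_apply]
    have hsub : 1 - 2 * d / (a * exp x + b + d) = (a * exp x + b - d) / (a * exp x + b + d) := by
      field_simp; ring
    rw [hsub, cosh_eq, exp_neg]
    have hEne := hE.ne'
    field_simp
    linear_combination (2 * exp x * d) * hd2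
  have hlim : Tendsto F atTop (𝓝 0) := by
    have h : Tendsto (fun x => 1 - 2 * d / (a * exp x + b + d)) atTop (𝓝 (1 - 0)) :=
      tendsto_const_nhds.sub (tendsto_const_nhds.div_atTop (tendsto_atTop_add_const_right _ _
        (tendsto_atTop_add_const_right _ _ (tendsto_exp_atTop.const_mul_atTop ha))))
    simpa using (h.log (by norm_num)).div_const d
  rw [integral_eq_two_mul_sub_of_even (fun x => by rw [cosh_neg])
    (fun x => by positivity) hderiv hlim]
  rw [artanh_eq_half_log ⟨by linarith [div_pos hd hb], (div_le_one hb).mpr hdb.le⟩]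
  have hratio : (1 + d / b) / (1 - d / b) = ((1 - 2 * d / (a + b + d)) ^ 2)⁻¹ := by
    have : a + b - d ≠ 0 := by linarith
    field_simp
    rw [div_eq_div_iff (by linarith) (pow_ne_zero 2 (by linarith))]
    linear_combination (2 * d) * hd2
  simp only [F, exp_zero, mul_one, hratio, log_inv, log_pow]
  field_simp
  ring

lemma sqrt_four_mul (x : ℝ) : √(4 * x) = 2 * √x := by
  rw [sqrt_mul (by norm_num), show (4 : ℝ) = 2 ^ 2 by norm_num, sqrt_sq (by norm_num)]

lemma PhiB_one_two_mul_sq {γ s : ℝ} (hs : s ∈ Ioo (-1) 0) (x : ℝ) :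
    PhiB γ 1 (2 * s) x ^ 2 =
      4 * (1 - s ^ 2) / (√(s ^ 2 + γ * (1 - s ^ 2)) * cosh (2 * √(1 - s ^ 2) * x) - s) := by
  have hp : 0 < 1 - s ^ 2 := by nlinarith [hs.1, hs.2]
  have hden : 0 < √(s ^ 2 + γ * (1 - s ^ 2)) * cosh (2 * √(1 - s ^ 2) * x) - s := by
    have := mul_nonneg (sqrt_nonneg (s ^ 2 + γ * (1 - s ^ 2))) (cosh_pos (2 * √(1 - s ^ 2) * x)).le
    linarith [hs.2]
  rw [PhiB, show 4 * 1 - (2 * s) ^ 2 = 4 * (1 - s ^ 2) by ring,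
    show (2 * s) ^ 2 + γ * (4 * (1 - s ^ 2)) = 4 * (s ^ 2 + γ * (1 - s ^ 2)) by ring,
    sqrt_four_mul, sqrt_four_mul, sq_sqrt (div_nonneg (by positivity) (by linarith))]
  field_simp

lemma massCurve_eq_mul_integral {γ s : ℝ} (hs : s ∈ Ioo (-1) 0) :
    massCurve γ s = 2 * √(1 - s ^ 2) * ∫ y, (√(s ^ 2 + γ * (1 - s ^ 2)) * cosh y + -s)⁻¹ := by
  have hp : 0 < 1 - s ^ 2 := by nlinarith [hs.1, hs.2]
  calc massCurve γ s = ∫ x, 4 * (1 - s ^ 2) *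
        (fun y => (√(s ^ 2 + γ * (1 - s ^ 2)) * cosh y + -s)⁻¹) (2 * √(1 - s ^ 2) * x) := by
        simp only [massCurve, PhiB_one_two_mul_sq hs, div_eq_mul_inv, sub_eq_add_neg]
    _ = _ := by
      rw [integral_const_mul, Measure.integral_comp_mul_left
        (fun y => (√(s ^ 2 + γ * (1 - s ^ 2)) * cosh y + -s)⁻¹), smul_eq_mul,
        abs_of_pos (by positivity), ← mul_assoc]
      congr 1
      have := sq_sqrt hp.le
      field_simp
      linarith

/-- `tanAngle (-cos θ) = tan θ` for `θ ∈ (0, π / 2)`. -/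
noncomputable def tanAngle (s : ℝ) : ℝ := √(1 - s ^ 2) / -s

lemma mem_Ioo_neg_sqrt_iff {γ s : ℝ} (hγ : γ ≤ 0) :
    s ∈ Ioo (-1) (-√(-γ / (1 - γ))) ↔ s ∈ Ioo (-1) 0 ∧ -γ * (1 - s ^ 2) < s ^ 2 := by
  constructor
  · rintro ⟨h1, h2⟩
    have hs : s < 0 := h2.trans_le (neg_nonpos.mpr (sqrt_nonneg _))
    refine ⟨⟨h1, hs⟩, ?_⟩
    have := (sqrt_lt' (by linarith)).mp (lt_neg.mp h2)
    rw [div_lt_iff₀ (by linarith)] at this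
    linarith
  · rintro ⟨⟨h1, hs⟩, h⟩
    refine ⟨h1, lt_neg.mp ((sqrt_lt' (by linarith)).mpr ?_)⟩
    rw [div_lt_iff₀ (by linarith)]
    linarith

lemma sqrt_mul_tanAngle_lt_one_iff {γ s : ℝ} (hγ : γ ≤ 0) (hs : s ∈ Ioo (-1) 0) :
    √(-γ) * tanAngle s < 1 ↔ -γ * (1 - s ^ 2) < s ^ 2 := by
  rw [tanAngle, ← mul_div_assoc, div_lt_one (by linarith [hs.2]), ← sqrt_mul (by linarith),
    sqrt_lt' (by linarith [hs.2]), neg_sq]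

lemma tanAngle_pos {s : ℝ} (hs : s ∈ Ioo (-1) 0) : 0 < tanAngle s :=
  div_pos (sqrt_pos.mpr (by nlinarith [hs.1, hs.2])) (neg_pos.mpr hs.2)

lemma continuousOn_tanAngle : ContinuousOn tanAngle (Ioo (-1) 0) :=
  ContinuousOn.div (by fun_prop) (by fun_prop) fun s hs => neg_ne_zero.mpr hs.2.ne

lemma strictMonoOn_tanAngle : StrictMonoOn tanAngle (Ioo (-1) 0) := by
  intro s hs t ht hst
  have hsq : √(1 - s ^ 2) < √(1 - t ^ 2) :=
    sqrt_lt_sqrt (by nlinarith [hs.1, hs.2]) (by nlinarith [hs.2, ht.2])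
  exact div_lt_div₀ hsq (by linarith) (sqrt_nonneg _) (neg_pos.mpr ht.2)

lemma tanAngle_neg_inv_sqrt {z : ℝ} (hz : 0 < z) : tanAngle (-(√(1 + z ^ 2))⁻¹) = z := by
  have hq : 0 < √(1 + z ^ 2) := sqrt_pos.mpr (by positivity)
  have hp : 1 - (-(√(1 + z ^ 2))⁻¹) ^ 2 = (z / √(1 + z ^ 2)) ^ 2 := by
    rw [div_pow, neg_sq, inv_pow, sq_sqrt (by positivity)]
    field_simp
    ring
  rw [tanAngle, hp, sqrt_sq (by positivity), neg_neg]
  field_simp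

lemma neg_inv_sqrt_mem_Ioo {z : ℝ} (hz : 0 < z) : -(√(1 + z ^ 2))⁻¹ ∈ Ioo (-1) 0 := by
  have hq : 1 < √(1 + z ^ 2) := by
    rw [lt_sqrt zero_le_one]; nlinarith
  exact ⟨neg_lt_neg (inv_lt_one_of_one_lt₀ hq), neg_neg_iff_pos.mpr (by positivity)⟩

lemma massCurve_zero {s : ℝ} (hs : s ∈ Ioo (-1) 0) : massCurve 0 s = 4 * tanAngle s := by
  have hs0 : 0 < -s := neg_pos.mpr hs.2
  rw [massCurve_eq_mul_integral hs, zero_mul, add_zero, sqrt_sq_eq_abs, abs_of_neg hs.2,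
    integral_inv_mul_cosh_add_self hs0, tanAngle]
  ring

lemma massCurve_of_neg {γ s : ℝ} (hγ : γ < 0) (hs : s ∈ Ioo (-1) 0)
    (hlt : -γ * (1 - s ^ 2) < s ^ 2) :
    massCurve γ s = 4 / √(-γ) * artanh (√(-γ) * tanAngle s) := by
  have hp : 0 < 1 - s ^ 2 := by nlinarith [hs.1, hs.2]
  have hw : 0 < √(s ^ 2 + γ * (1 - s ^ 2)) := sqrt_pos.mpr (by linarith)
  have hws : √(s ^ 2 + γ * (1 - s ^ 2)) < -s :=
    (sqrt_lt' (by linarith [hs.2])).mpr (by nlinarith)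
  have hd : √((-s) ^ 2 - √(s ^ 2 + γ * (1 - s ^ 2)) ^ 2) = √(-γ) * √(1 - s ^ 2) := by
    rw [sq_sqrt (by linarith), ← sqrt_mul (by linarith)]
    ring_nf
  rw [massCurve_eq_mul_integral hs, integral_inv_mul_cosh_add hw hws, hd, tanAngle,
    mul_div_assoc]
  have := sqrt_pos.mpr (neg_pos.mpr hγ)
  have := sqrt_pos.mpr hp
  field_simp
  ring

def ContStrictMonoBijOn (f : ℝ → ℝ) (s t : Set ℝ) : Prop :=
  ContinuousOn f s ∧ StrictMonoOn f s ∧ BijOn f s t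

lemma ContStrictMonoBijOn.comp {f g : ℝ → ℝ} {s t u : Set ℝ} (hg : ContStrictMonoBijOn g t u)
    (hf : ContStrictMonoBijOn f s t) : ContStrictMonoBijOn (g ∘ f) s u :=
  ⟨hg.1.comp hf.1 hf.2.2.mapsTo, hg.2.1.comp hf.2.1 hf.2.2.mapsTo, hg.2.2.comp hf.2.2⟩

lemma ContStrictMonoBijOn.congr {f g : ℝ → ℝ} {s t : Set ℝ} (hf : ContStrictMonoBijOn f s t)
    (h : EqOn f g s) : ContStrictMonoBijOn g s t :=
  ⟨hf.1.congr h.symm, hf.2.1.congr h, hf.2.2.congr h⟩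

lemma contStrictMonoBijOn_const_mul {c : ℝ} (hc : 0 < c) :
    ContStrictMonoBijOn (fun z => c * z) (Ioi 0) (Ioi 0) := by
  have hmono : StrictMonoOn (fun z => c * z) (Ioi 0) :=
    fun x _ y _ h => mul_lt_mul_of_pos_left h hc
  exact ⟨by fun_prop, hmono, fun z hz => mul_pos hc hz, hmono.injOn,
    fun y hy => ⟨y / c, div_pos hy hc, mul_div_cancel₀ y hc.ne'⟩⟩

lemma continuousOn_artanh : ContinuousOn artanh (Ioo (-1) 1) := by
  refine ContinuousOn.log (ContinuousOn.sqrt (ContinuousOn.div (by fun_prop) (by fun_prop)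
    fun x hx => by linarith [hx.2])) fun x hx => ?_
  exact (sqrt_pos.mpr (div_pos (by linarith [hx.1]) (by linarith [hx.2]))).ne'

lemma tanh_pos {x : ℝ} (hx : 0 < x) : 0 < tanh x := by
  rw [tanh_eq_sinh_div_cosh]
  exact div_pos (sinh_pos_iff.mpr hx) (cosh_pos x)

lemma contStrictMonoBijOn_div_mul_artanh {c β : ℝ} (hc : 0 < c) (hβ : 0 < β) :
    ContStrictMonoBijOn (fun z => c / β * artanh (β * z)) {z | 0 < z ∧ β * z < 1} (Ioi 0) := by
  have hmem : ∀ z ∈ {z | 0 < z ∧ β * z < 1}, β * z ∈ Ioo (-1) 1 := fun z hz =>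
    ⟨by linarith [mul_pos hβ hz.1], hz.2⟩
  have hmono : StrictMonoOn (fun z => c / β * artanh (β * z)) {z | 0 < z ∧ β * z < 1} :=
    fun x hx y hy h => mul_lt_mul_of_pos_left (strictMonoOn_artanh (hmem x hx) (hmem y hy)
      (mul_lt_mul_of_pos_left h hβ)) (div_pos hc hβ)
  refine ⟨continuousOn_const.mul (continuousOn_artanh.comp (by fun_prop) hmem), hmono,
    fun z hz => ?_, hmono.injOn, fun y hy => ?_⟩
  · exact mul_pos (div_pos hc hβ) (artanh_pos ⟨mul_pos hβ hz.1, hz.2⟩)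
  · refine ⟨tanh (β * y / c) / β, ⟨div_pos (tanh_pos (div_pos (mul_pos hβ hy) hc)) hβ, ?_⟩, ?_⟩
    · rw [mul_div_cancel₀ _ hβ.ne']; exact tanh_lt_one _
    · dsimp only
      rw [mul_div_cancel₀ _ hβ.ne', artanh_tanh]
      field_simp

lemma contStrictMonoBijOn_tanAngle {γ : ℝ} (hγ : γ ≤ 0) :
    ContStrictMonoBijOn tanAngle (Ioo (-1) (-√(-γ / (1 - γ)))) {z | 0 < z ∧ √(-γ) * z < 1} := by
  have hsub : Ioo (-1) (-√(-γ / (1 - γ))) ⊆ Ioo (-1) 0 := fun s hs =>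
    ((mem_Ioo_neg_sqrt_iff hγ).mp hs).1
  refine ⟨continuousOn_tanAngle.mono hsub, strictMonoOn_tanAngle.mono hsub, fun s hs => ?_,
    (strictMonoOn_tanAngle.mono hsub).injOn, fun z hz => ?_⟩
  · obtain ⟨hs0, hlt⟩ := (mem_Ioo_neg_sqrt_iff hγ).mp hs
    exact ⟨tanAngle_pos hs0, (sqrt_mul_tanAngle_lt_one_iff hγ hs0).mpr hlt⟩
  · have hs0 := neg_inv_sqrt_mem_Ioo hz.1
    refine ⟨_, (mem_Ioo_neg_sqrt_iff hγ).mpr ⟨hs0, ?_⟩, tanAngle_neg_inv_sqrt hz.1⟩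
    rw [← sqrt_mul_tanAngle_lt_one_iff hγ hs0, tanAngle_neg_inv_sqrt hz.1]
    exact hz.2

/-- For `b ≤ -3/16` (so `γ ≤ 0`), with `s_* = √(-γ/(1-γ))`, the map `s ↦ M(φ_{1,2s})`
is continuous, strictly increasing, and maps `(-1, -s_*)` bijectively onto `(0, ∞)`. -/
theorem stmt_7 (b γ : ℝ) (hb : b ≤ -3 / 16) (hγ : γ = 1 + 16 / 3 * b) :
    ContinuousOn (massCurve γ) (Ioo (-1) (-Real.sqrt (-γ / (1 - γ)))) ∧
    StrictMonoOn (massCurve γ) (Ioo (-1) (-Real.sqrt (-γ / (1 - γ)))) ∧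
    BijOn (massCurve γ) (Ioo (-1) (-Real.sqrt (-γ / (1 - γ)))) (Ioi 0) := by
  obtain rfl | hneg := (show γ ≤ 0 by linarith).eq_or_lt
  · have hI : Ioo (-1 : ℝ) (-√(-0 / (1 - 0))) = Ioo (-1) 0 := by norm_num
    have hJ : {z : ℝ | 0 < z ∧ √(-0) * z < 1} = Ioi 0 := by ext; simp
    have htan := contStrictMonoBijOn_tanAngle (le_refl (0 : ℝ))
    rw [hI, hJ] at htan
    rw [hI]
    exact ((contStrictMonoBijOn_const_mul four_pos).comp htan).congr fun s hs =>
      (massCurve_zero hs).symm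
  · refine ((contStrictMonoBijOn_div_mul_artanh four_pos (sqrt_pos.mpr (neg_pos.mpr hneg))).comp
      (contStrictMonoBijOn_tanAngle hneg.le)).congr fun s hs => ?_
    obtain ⟨hs0, hlt⟩ := (mem_Ioo_neg_sqrt_iff hneg.le).mp hs
    exact (massCurve_of_neg hneg hs0 hlt).symm
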